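/- arXiv:1305.5045 — 3 statements merged into one kernel-verified Lean document; each statement's English description precedes it below -/
import Mathlib

section
/- Let c with c² > 1 and let ψ : ℝ → ℝ be a smooth function with 1 < ψ(ξ) < c for all ξ. If ψ satisfies the first-order ODE c² (ψ')² = (ψ − 1)² (c² − ψ²), and φ := c(1 − 1/ψ), then the pair (φ, ψ) satisfies the integrated traveling-wave equation −c φ + (3/2) φ² + ψ²/2 = ψ²(φ − c) φ'' − ψ² (φ')²/2 + 1/2. -/
open Real

/-- The first-order ODE `c²(ψ')² = (ψ-1)²(c²-ψ²)` together with `φ = c(1 - 1/ψ)` implies the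
integrated traveling-wave equation of the new shallow-water system. -/
theorem first_order_ODE_implies_integrated_equation
    (c : ℝ) (hc : 1 < c^2)
    (ψ : ℝ → ℝ) (hψ : ContDiff ℝ (⊤ : ℕ∞) ψ)
    (hrange : ∀ ξ, 1 < ψ ξ ∧ ψ ξ < c)
    (hODE : ∀ ξ, c^2 * (deriv ψ ξ)^2 = (ψ ξ - 1)^2 * (c^2 - (ψ ξ)^2)) :
    ∀ ξ,
      -c * ((fun ξ => c * (1 - 1 / ψ ξ)) ξ)
        + (3/2) * ((fun ξ => c * (1 - 1 / ψ ξ)) ξ)^2 + (ψ ξ)^2 / 2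
      = (ψ ξ)^2 * ((fun ξ => c * (1 - 1 / ψ ξ)) ξ - c)
          * deriv (deriv (fun ξ => c * (1 - 1 / ψ ξ))) ξ
        - (ψ ξ)^2 * (deriv (fun ξ => c * (1 - 1 / ψ ξ)) ξ)^2 / 2 + 1/2 := by
  have hψd : Differentiable ℝ ψ := hψ.differentiable (by simp)
  have hψ'd : Differentiable ℝ (deriv ψ) :=
    ((contDiff_infty_iff_deriv.mp (hψ.of_le (by simp))).2).differentiable (by norm_num)
  have hpos : ∀ ξ, 0 < ψ ξ := fun ξ => lt_trans one_pos (hrange ξ).1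
  have hne : ∀ ξ, ψ ξ ≠ 0 := fun ξ => (hpos ξ).ne'
  have hc0 : 0 < c := lt_trans (hpos 0) (hrange 0).2
  -- first derivative of φ
  have hφ' : deriv (fun ξ => c * (1 - 1 / ψ ξ)) = fun ξ => c * deriv ψ ξ / (ψ ξ)^2 := by
    funext ξ
    have h1 : HasDerivAt (fun x => (1:ℝ) / ψ x)
        ((0 * ψ ξ - 1 * deriv ψ ξ) / (ψ ξ)^2) ξ :=
      (hasDerivAt_const ξ (1:ℝ)).div (hψd ξ).hasDerivAt (hne ξ)
    have h2 : HasDerivAt (fun x => c * (1 - 1 / ψ x))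
        (c * (0 - (0 * ψ ξ - 1 * deriv ψ ξ) / (ψ ξ)^2)) ξ :=
      (((hasDerivAt_const ξ (1:ℝ)).sub h1)).const_mul c
    rw [h2.deriv]; ring
  -- differentiate the ODE to get ψ''
  have hψ'ne : ∀ ξ, deriv ψ ξ ≠ 0 := by
    intro ξ
    have hlt : (ψ ξ)^2 < c^2 := by nlinarith [(hrange ξ).1, (hrange ξ).2, hpos ξ]
    have h1 : (0:ℝ) < (ψ ξ - 1)^2 * (c^2 - (ψ ξ)^2) :=
      mul_pos (pow_pos (sub_pos.mpr (hrange ξ).1) 2) (sub_pos.mpr hlt)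
    intro h0
    have h2 := hODE ξ
    rw [h0] at h2
    nlinarith [h1, h2]
  have hE2 : ∀ ξ, c^2 * deriv (deriv ψ) ξ
      = (ψ ξ - 1) * (c^2 - (ψ ξ)^2) - ψ ξ * (ψ ξ - 1)^2 := by
    intro ξ
    have hL : HasDerivAt (fun x => c^2 * (deriv ψ x)^2)
        (c^2 * (2 * deriv ψ ξ * deriv (deriv ψ) ξ)) ξ := by
      exact (((hψ'd ξ).hasDerivAt.pow 2).const_mul (c^2)).congr_deriv (by ring)
    have hR : HasDerivAt (fun x => (ψ x - 1)^2 * (c^2 - (ψ x)^2))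
        (2 * (ψ ξ - 1) * deriv ψ ξ * (c^2 - (ψ ξ)^2)
          + (ψ ξ - 1)^2 * (-(2 * ψ ξ * deriv ψ ξ))) ξ := by
      have h1 : HasDerivAt (fun x => (ψ x - 1)^2) (2 * (ψ ξ - 1) * deriv ψ ξ) ξ := by
        exact (((hψd ξ).hasDerivAt.sub_const 1).pow 2).congr_deriv (by ring)
      have h2 : HasDerivAt (fun x => c^2 - (ψ x)^2) (-(2 * ψ ξ * deriv ψ ξ)) ξ := by
        exact ((hasDerivAt_const ξ (c^2)).sub ((hψd ξ).hasDerivAt.pow 2)).congr_deriv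
          (by ring)
      exact h1.mul h2
    have heq : (fun x => c^2 * (deriv ψ x)^2)
        = fun x => (ψ x - 1)^2 * (c^2 - (ψ x)^2) := funext hODE
    have := hL.deriv
    rw [heq, hR.deriv] at this
    refine mul_left_cancel₀ (hψ'ne ξ) ?_
    show deriv ψ ξ * (c^2 * deriv (deriv ψ) ξ)
        = deriv ψ ξ * ((ψ ξ - 1) * (c^2 - (ψ ξ)^2) - ψ ξ * (ψ ξ - 1)^2)
    linear_combination -this/2
  intro ξ
  -- second derivative of φ
  have hφ'' : deriv (fun ξ => c * deriv ψ ξ / (ψ ξ)^2) ξ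
      = (c * deriv (deriv ψ) ξ * (ψ ξ)^2 - c * deriv ψ ξ * (2 * ψ ξ * deriv ψ ξ)) / ((ψ ξ)^2)^2 := by
    have h1 : HasDerivAt (fun x => c * deriv ψ x) (c * deriv (deriv ψ) ξ) ξ :=
      (hψ'd ξ).hasDerivAt.const_mul c
    have h2 : HasDerivAt (fun x => (ψ x)^2) (2 * ψ ξ * deriv ψ ξ) ξ :=
      ((hψd ξ).hasDerivAt.pow 2).congr_deriv (by ring)
    have := h1.div h2 (pow_ne_zero 2 (hne ξ))
    exact this.deriv
  simp only [hφ', hφ'']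
  have e1 := hODE ξ
  have e2 := hE2 ξ
  have hn := hne ξ
  field_simp
  ring_nf
  linear_combination 2 * ψ ξ * e2 - 3 * e1
end

section
/- Let c² > 1 and define H(ξ) = 1 + (c² − 1) / ( 1 + ((c²+1)/2) cosh( (√(c²−1)/c) ξ ) + ((c²−1)/2) sinh( (√(c²−1)/c) ξ ) ). Then H is a smooth function on ℝ satisfying the ODE c² (H')² = (H − 1)² (c² − H²) for all ξ ∈ ℝ. -/
open Real

/-- The explicit solitary-wave profile is smooth and satisfies the first-order ODE
`c²(H')² = (H-1)²(c² - H²)`. -/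
theorem solitary_profile_satisfies_ODE
    (c : ℝ) (hc : 1 < c^2)
    (H : ℝ → ℝ)
    (hdef : ∀ ξ, H ξ = 1 + (c^2 - 1) /
      (1 + ((c^2 + 1)/2) * Real.cosh ((Real.sqrt (c^2 - 1) / c) * ξ)
         + ((c^2 - 1)/2) * Real.sinh ((Real.sqrt (c^2 - 1) / c) * ξ))) :
    ContDiff ℝ (⊤ : ℕ∞) H ∧
    ∀ ξ, c^2 * (deriv H ξ)^2 = (H ξ - 1)^2 * (c^2 - (H ξ)^2) := by
  have hc0 : c ≠ 0 := by
    intro h; rw [h] at hc; norm_num at hc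
  set s := Real.sqrt (c^2 - 1) with hs_def
  have hs : s^2 = c^2 - 1 := Real.sq_sqrt (by linarith)
  set k := s / c with hk_def
  set D : ℝ → ℝ := fun ξ => 1 + (c^2/2) * Real.exp (k*ξ) + (1/2) * Real.exp (-(k*ξ)) with hD_def
  have hDpos : ∀ ξ, 0 < D ξ := by
    intro ξ
    have h1 : 0 < Real.exp (k*ξ) := Real.exp_pos _
    have h2 : 0 < Real.exp (-(k*ξ)) := Real.exp_pos _
    have : 0 < c^2 := by linarith
    simp only [hD_def]
    nlinarith
  have hDne : ∀ ξ, D ξ ≠ 0 := fun ξ => ne_of_gt (hDpos ξ)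
  have hHfun : H = fun ξ => 1 + (c^2 - 1) / D ξ := by
    funext ξ
    rw [hdef ξ]
    simp only [hD_def, Real.cosh_eq, Real.sinh_eq]
    congr 1
    congr 1
    ring
  have hk2 : c^2 * k^2 = c^2 - 1 := by
    rw [hk_def, div_pow]
    field_simp
    linarith [hs]
  have hD' : ∀ ξ, HasDerivAt D ((c^2/2) * (Real.exp (k*ξ) * k) + (1/2) * (Real.exp (-(k*ξ)) * (-k))) ξ := by
    intro ξ
    have h1 : HasDerivAt (fun ξ : ℝ => k * ξ) k ξ := by
      simpa using (hasDerivAt_id ξ).const_mul k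
    have h2 : HasDerivAt (fun ξ : ℝ => Real.exp (k*ξ)) (Real.exp (k*ξ) * k) ξ :=
      (Real.hasDerivAt_exp (k*ξ)).comp ξ h1
    have h3 : HasDerivAt (fun ξ : ℝ => Real.exp (-(k*ξ))) (Real.exp (-(k*ξ)) * (-k)) ξ :=
      h1.neg.exp
    have := ((h2.const_mul (c^2/2)).const_add 1).add (h3.const_mul (1/2))
    exact this
  have hH' : ∀ ξ, HasDerivAt H
      ((0 * D ξ - (c^2-1) * ((c^2/2) * (Real.exp (k*ξ) * k) + (1/2) * (Real.exp (-(k*ξ)) * (-k)))) / (D ξ)^2) ξ := by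
    intro ξ
    rw [hHfun]
    exact (((hasDerivAt_const ξ (c^2-1)).div (hD' ξ) (hDne ξ)).const_add 1)
  constructor
  · rw [hHfun]
    apply contDiff_const.add
    apply contDiff_const.div
    · exact (contDiff_const.add
        (contDiff_const.mul ((contDiff_const.mul contDiff_id).exp))).add
        (contDiff_const.mul (((contDiff_const.mul contDiff_id).neg).exp))
    · exact hDne
  · intro ξ
    rw [(hH' ξ).deriv, hHfun]
    simp only
    set u := Real.exp (k*ξ) with hu
    set v := Real.exp (-(k*ξ)) with hv
    have huv : u * v = 1 := by
      rw [hu, hv, ← Real.exp_add]; simp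
    have hune : u ≠ 0 := Real.exp_ne_zero _
    have hv' : v = u⁻¹ := eq_inv_of_mul_eq_one_left (by linarith [huv, mul_comm u v])
    have hDξ : D ξ = 1 + (c^2/2) * u + (1/2) * v := rfl
    have step : c^2 * ((0 * D ξ - (c^2-1) * ((c^2/2) * (u * k) + (1/2) * (v * (-k)))) / (D ξ)^2)^2
        = (c^2 * k^2) * (((c^2-1) * ((c^2/2)*u - (1/2)*v)) / (D ξ)^2)^2 := by
      ring
    rw [step, hk2, hDξ, hv']
    have hne : 1 + (c^2/2) * u + (1/2) * u⁻¹ ≠ 0 := by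
      rw [← hv', ← hDξ]; exact hDne ξ
    have hne2 : u * (2 + c^2 * u) + 1 ≠ 0 := by positivity
    field_simp
    ring
end

section
/- Suppose smooth functions u, H satisfy H_t + (Hu)_x = 0, and define m = u − (H²u_x)_x. Then the pair of equations m_t = −( (mu)_x + m u_x + H(−H u_x² + H − 1)_x ), H_t = −(H u)_x is equivalent to the system u_t + 3uu_x + HH_x = [H²(uu_xx + u_xt − u_x²/2)]_x, H_t + (Hu)_x = 0. That is, substituting m = u − (H²u_x)_x into the Hamiltonian evolution equation and using H_t = −(Hu)_x yields exactly the first equation of the system. -/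
open Real

noncomputable def pdt (f : ℝ → ℝ → ℝ) (t x : ℝ) : ℝ := deriv (fun s => f s x) t
noncomputable def pdx (f : ℝ → ℝ → ℝ) (t x : ℝ) : ℝ := deriv (fun y => f t y) x

private lemma diffx {f : ℝ → ℝ → ℝ} (hf : ContDiff ℝ (⊤ : ℕ∞) (Function.uncurry f)) (t : ℝ) :
    Differentiable ℝ (fun y => f t y) := by
  have h := (hf.differentiable (by simp)).comp ((differentiable_const t).prodMk differentiable_id)
  exact h

private lemma difft {f : ℝ → ℝ → ℝ} (hf : ContDiff ℝ (⊤ : ℕ∞) (Function.uncurry f)) (x : ℝ) :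
    Differentiable ℝ (fun s => f s x) := by
  have h := (hf.differentiable (by simp)).comp (differentiable_id.prodMk (differentiable_const x))
  exact h

private lemma dX {f : ℝ → ℝ → ℝ} (hf : ContDiff ℝ (⊤ : ℕ∞) (Function.uncurry f)) (t x : ℝ) :
    HasDerivAt (fun y => f t y) (pdx f t x) x :=
  ((diffx hf t) x).hasDerivAt

private lemma dT {f : ℝ → ℝ → ℝ} (hf : ContDiff ℝ (⊤ : ℕ∞) (Function.uncurry f)) (t x : ℝ) :
    HasDerivAt (fun s => f s x) (pdt f t x) t :=
  ((difft hf x) t).hasDerivAt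

private lemma pdx_eq_fderiv {f : ℝ → ℝ → ℝ} (hf : ContDiff ℝ (⊤ : ℕ∞) (Function.uncurry f)) (t x : ℝ) :
    pdx f t x = fderiv ℝ (Function.uncurry f) (t, x) (0, 1) := by
  have h1 : HasFDerivAt (Function.uncurry f) (fderiv ℝ (Function.uncurry f) (t, x)) (t, x) :=
    ((hf.differentiable (by simp)) (t, x)).hasFDerivAt
  have h2 : HasDerivAt (fun y : ℝ => ((t : ℝ), y)) ((0 : ℝ), (1 : ℝ)) x :=
    (hasDerivAt_const x t).prodMk (hasDerivAt_id x)
  exact (h1.comp_hasDerivAt x h2).deriv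

private lemma pdt_eq_fderiv {f : ℝ → ℝ → ℝ} (hf : ContDiff ℝ (⊤ : ℕ∞) (Function.uncurry f)) (t x : ℝ) :
    pdt f t x = fderiv ℝ (Function.uncurry f) (t, x) (1, 0) := by
  have h1 : HasFDerivAt (Function.uncurry f) (fderiv ℝ (Function.uncurry f) (t, x)) (t, x) :=
    ((hf.differentiable (by simp)) (t, x)).hasFDerivAt
  have h2 : HasDerivAt (fun s : ℝ => (s, (x : ℝ))) ((1 : ℝ), (0 : ℝ)) t :=
    (hasDerivAt_id t).prodMk (hasDerivAt_const t x)
  exact (h1.comp_hasDerivAt t h2).deriv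

private lemma smooth_pdx {f : ℝ → ℝ → ℝ} (hf : ContDiff ℝ (⊤ : ℕ∞) (Function.uncurry f)) :
    ContDiff ℝ (⊤ : ℕ∞) (Function.uncurry (pdx f)) := by
  have e : Function.uncurry (pdx f) = fun p : ℝ × ℝ => fderiv ℝ (Function.uncurry f) p (0, 1) := by
    funext p
    exact pdx_eq_fderiv hf p.1 p.2
  rw [e]
  exact (hf.fderiv_right (by simp)).clm_apply contDiff_const

private lemma smooth_pdt {f : ℝ → ℝ → ℝ} (hf : ContDiff ℝ (⊤ : ℕ∞) (Function.uncurry f)) :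
    ContDiff ℝ (⊤ : ℕ∞) (Function.uncurry (pdt f)) := by
  have e : Function.uncurry (pdt f) = fun p : ℝ × ℝ => fderiv ℝ (Function.uncurry f) p (1, 0) := by
    funext p
    exact pdt_eq_fderiv hf p.1 p.2
  rw [e]
  exact (hf.fderiv_right (by simp)).clm_apply contDiff_const

private lemma clairaut {f : ℝ → ℝ → ℝ} (hf : ContDiff ℝ (⊤ : ℕ∞) (Function.uncurry f)) (t x : ℝ) :
    pdt (pdx f) t x = pdx (pdt f) t x := by
  set F := Function.uncurry f with hF
  have hd : ∀ p, HasFDerivAt F (fderiv ℝ F p) p := fun p =>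
    ((hf.differentiable (by simp)) p).hasFDerivAt
  have hsm : ContDiff ℝ (⊤ : ℕ∞) (fderiv ℝ F) := hf.fderiv_right (by simp)
  have hd2 : HasFDerivAt (fderiv ℝ F) (fderiv ℝ (fderiv ℝ F) (t, x)) (t, x) :=
    ((hsm.differentiable (by simp)) (t, x)).hasFDerivAt
  have symm := second_derivative_symmetric hd hd2
  have key : ∀ v w : ℝ × ℝ,
      fderiv ℝ (fun p => fderiv ℝ F p v) (t, x) w = fderiv ℝ (fderiv ℝ F) (t, x) w v := by
    intro v w
    rw [(hd2.clm_apply (hasFDerivAt_const v (t, x))).fderiv]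
    simp
  have h1 : pdt (pdx f) t x = fderiv ℝ (fderiv ℝ F) (t, x) (1, 0) (0, 1) := by
    rw [pdt_eq_fderiv (smooth_pdx hf) t x]
    have e : Function.uncurry (pdx f) = fun p : ℝ × ℝ => fderiv ℝ F p (0, 1) := by
      funext p; exact pdx_eq_fderiv hf p.1 p.2
    rw [e, key]
  have h2 : pdx (pdt f) t x = fderiv ℝ (fderiv ℝ F) (t, x) (0, 1) (1, 0) := by
    rw [pdx_eq_fderiv (smooth_pdt hf) t x]
    have e : Function.uncurry (pdt f) = fun p : ℝ × ℝ => fderiv ℝ F p (1, 0) := by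
      funext p; exact pdt_eq_fderiv hf p.1 p.2
    rw [e, key]
  rw [h1, h2, symm]

/-- Given the mass equation, the Hamiltonian evolution equation for
`m = u - (H²u_x)_x` is pointwise equivalent to the first equation of the new system. -/
theorem hamiltonian_form_equivalence
    (u H : ℝ → ℝ → ℝ)
    (hu : ContDiff ℝ (⊤ : ℕ∞) (Function.uncurry u))
    (hH : ContDiff ℝ (⊤ : ℕ∞) (Function.uncurry H))
    (mass : ∀ t x, pdt H t x + pdx (fun t x => H t x * u t x) t x = 0) :
    ∀ t x,
      (pdt (fun t x => u t x - pdx (fun t x => (H t x)^2 * pdx u t x) t x) t x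
        = -(pdx (fun t x =>
              (u t x - pdx (fun t x => (H t x)^2 * pdx u t x) t x) * u t x) t x
            + (u t x - pdx (fun t x => (H t x)^2 * pdx u t x) t x) * pdx u t x
            + H t x * pdx (fun t x =>
                -(H t x) * (pdx u t x)^2 + H t x - 1) t x))
      ↔
      (pdt u t x + 3 * u t x * pdx u t x + H t x * pdx H t x
        = pdx (fun t x => (H t x)^2 *
            (u t x * pdx (pdx u) t x + pdt (pdx u) t x - (pdx u t x)^2 / 2)) t x) := by
  intro t x
  have sux := smooth_pdx hu
  have suxx := smooth_pdx sux
  have suxt := smooth_pdt sux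
  have sHx := smooth_pdx hH
  have sHt := smooth_pdt hH
  have hA : ∀ t x, pdx (fun t x => (H t x)^2 * pdx u t x) t x
      = 2 * H t x * pdx H t x * pdx u t x + (H t x)^2 * pdx (pdx u) t x := by
    intro t x
    exact ((((dX hH t x).pow 2).mul (dX sux t x)).deriv).trans (by simp only [Pi.pow_apply, Pi.neg_apply, Pi.mul_apply, Pi.add_apply, Pi.sub_apply]; ring)
  have em1 : (fun t x => u t x - pdx (fun t x => (H t x)^2 * pdx u t x) t x)
      = (fun t x => u t x - (2 * H t x * pdx H t x * pdx u t x + (H t x)^2 * pdx (pdx u) t x)) :=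
    funext fun t => funext fun x => by rw [hA]
  have em2 : (fun t x => (u t x - pdx (fun t x => (H t x)^2 * pdx u t x) t x) * u t x)
      = (fun t x => (u t x - (2 * H t x * pdx H t x * pdx u t x
          + (H t x)^2 * pdx (pdx u) t x)) * u t x) :=
    funext fun t => funext fun x => by rw [hA]
  have hMt : pdt (fun t x => u t x - (2 * H t x * pdx H t x * pdx u t x
        + (H t x)^2 * pdx (pdx u) t x)) t x
      = pdt u t x - (2 * pdt H t x * pdx H t x * pdx u t x
        + 2 * H t x * pdt (pdx H) t x * pdx u t x
        + 2 * H t x * pdx H t x * pdt (pdx u) t x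
        + 2 * H t x * pdt H t x * pdx (pdx u) t x
        + (H t x)^2 * pdt (pdx (pdx u)) t x) := by
    have h := (dT hu t x).sub (((((dT hH t x).const_mul 2).mul (dT sHx t x)).mul (dT sux t x)).add
      (((dT hH t x).pow 2).mul (dT suxx t x)))
    exact h.deriv.trans (by simp only [Pi.pow_apply, Pi.neg_apply, Pi.mul_apply, Pi.add_apply, Pi.sub_apply]; ring)
  have hMx : pdx (fun t x => (u t x - (2 * H t x * pdx H t x * pdx u t x
        + (H t x)^2 * pdx (pdx u) t x)) * u t x) t x
      = (pdx u t x - (2 * pdx H t x * pdx H t x * pdx u t x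
          + 2 * H t x * pdx (pdx H) t x * pdx u t x
          + 4 * H t x * pdx H t x * pdx (pdx u) t x
          + (H t x)^2 * pdx (pdx (pdx u)) t x)) * u t x
        + (u t x - (2 * H t x * pdx H t x * pdx u t x
          + (H t x)^2 * pdx (pdx u) t x)) * pdx u t x := by
    have h := ((dX hu t x).sub (((((dX hH t x).const_mul 2).mul (dX sHx t x)).mul (dX sux t x)).add
      (((dX hH t x).pow 2).mul (dX suxx t x)))).mul (dX hu t x)
    exact h.deriv.trans (by simp only [Pi.pow_apply, Pi.neg_apply, Pi.mul_apply, Pi.add_apply, Pi.sub_apply]; ring)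
  have hB : pdx (fun t x => -(H t x) * (pdx u t x)^2 + H t x - 1) t x
      = -(pdx H t x) * (pdx u t x)^2 - 2 * H t x * pdx u t x * pdx (pdx u) t x + pdx H t x := by
    have h := (((dX hH t x).neg.mul ((dX sux t x).pow 2)).add (dX hH t x)).sub_const 1
    exact h.deriv.trans (by simp only [Pi.pow_apply, Pi.neg_apply, Pi.mul_apply, Pi.add_apply, Pi.sub_apply]; ring)
  have hR : pdx (fun t x => (H t x)^2 *
        (u t x * pdx (pdx u) t x + pdt (pdx u) t x - (pdx u t x)^2 / 2)) t x
      = 2 * H t x * pdx H t x * (u t x * pdx (pdx u) t x + pdt (pdx u) t x - (pdx u t x)^2 / 2)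
        + (H t x)^2 * (pdx u t x * pdx (pdx u) t x + u t x * pdx (pdx (pdx u)) t x
          + pdt (pdx (pdx u)) t x - pdx u t x * pdx (pdx u) t x) := by
    have h := ((dX hH t x).pow 2).mul ((((dX hu t x).mul (dX suxx t x)).add (dX suxt t x)).sub
      (((dX sux t x).pow 2).div_const 2))
    have h2 := h.deriv
    rw [← clairaut sux t x] at h2
    exact h2.trans (by simp only [Pi.pow_apply, Pi.neg_apply, Pi.mul_apply, Pi.add_apply, Pi.sub_apply]; ring)
  have hHU : ∀ t x, pdx (fun t x => H t x * u t x) t x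
      = pdx H t x * u t x + H t x * pdx u t x := by
    intro t x
    exact ((dX hH t x).mul (dX hu t x)).deriv
  have massE : pdt H t x + (pdx H t x * u t x + H t x * pdx u t x) = 0 := by
    rw [← hHU t x]; exact mass t x
  have massX : pdt (pdx H) t x + (pdx (pdx H) t x * u t x + 2 * pdx H t x * pdx u t x
      + H t x * pdx (pdx u) t x) = 0 := by
    have hd : HasDerivAt (fun y => pdt H t y + pdx (fun t x => H t x * u t x) t y)
        (pdx (pdt H) t x + ((pdx (pdx H) t x * u t x + pdx H t x * pdx u t x)
          + (pdx H t x * pdx u t x + H t x * pdx (pdx u) t x))) x := by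
      have e : (fun y => pdt H t y + pdx (fun t x => H t x * u t x) t y)
          = (fun y => pdt H t y + (pdx H t y * u t y + H t y * pdx u t y)) :=
        funext fun y => by rw [hHU t y]
      rw [e]
      exact (dX sHt t x).add (((dX sHx t x).mul (dX hu t x)).add ((dX hH t x).mul (dX sux t x)))
    have h0 : (fun y => pdt H t y + pdx (fun t x => H t x * u t x) t y) = fun _ => (0 : ℝ) :=
      funext fun y => mass t y
    have hz := hd.deriv
    rw [h0] at hz
    simp at hz
    rw [← clairaut hH t x] at hz
    linear_combination - hz
  rw [em1, em2, hMt, hMx, hA t x, hB, hR]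
  constructor <;> intro h
  · linear_combination h + (2 * pdx H t x * pdx u t x + 2 * H t x * pdx (pdx u) t x) * massE
      + (2 * H t x * pdx u t x) * massX
  · linear_combination h - (2 * pdx H t x * pdx u t x + 2 * H t x * pdx (pdx u) t x) * massE
      - (2 * H t x * pdx u t x) * massX
end
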